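/- Let M be a K×K symmetric real matrix with no two identical rows, and let C be an N×K binary membership matrix (each row of C has exactly one entry equal to 1) with every column containing at least one 1. Then for nodes i, j, the i-th and j-th rows of C·M·Cᵀ are equal if and only if i and j belong to the same class (rows i and j of C are equal). -/
import Mathlib



open Matrix
/-- For a membership matrix C encoding the class assignment c (with every class
    nonempty) and a symmetric matrix M with no two identical rows, rows i and j of
    C·M·Cᵀ are equal iff nodes i and j are in the same class (iff rows i, j of C
    are equal). -/
theorem block_matrix_rows_eq_iff_same_class (N K : ℕ)
    (c : Fin N → Fin K) (hc : Function.Surjective c)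
    (M : Matrix (Fin K) (Fin K) ℝ) (hsym : M.IsSymm)
    (hrows : ∀ k l : Fin K, k ≠ l → ∃ m, M k m ≠ M l m)
    (C : Matrix (Fin N) (Fin K) ℝ)
    (hC : ∀ i k, C i k = if c i = k then 1 else 0) :
    ∀ i j : Fin N, (C * M * Cᵀ) i = (C * M * Cᵀ) j ↔ C i = C j := by
  have hentry : ∀ i n : Fin N, (C * M * Cᵀ) i n = M (c i) (c n) := by
    intro i n
    simp only [Matrix.mul_apply, Matrix.transpose_apply, hC]
    simp [Finset.sum_ite_eq, Finset.mul_sum, mul_comm]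
  intro i j
  constructor
  · intro h
    funext k
    simp only [hC]
    by_cases hcij : c i = c j
    · rw [hcij]
    · exfalso
      obtain ⟨m, hm⟩ := hrows (c i) (c j) hcij
      obtain ⟨n, hn⟩ := hc m
      have := congrFun h n
      rw [hentry, hentry, hn] at this
      exact hm this
  · intro h
    have hcij : c i = c j := by
      have := congrFun h (c i)
      simp [hC] at this
      by_contra hne
      simp [Ne.symm hne] at this
    funext n
    rw [hentry, hentry, hcij]
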